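/- arXiv:1410.7908 — 2 statements merged into one kernel-verified Lean document; each statement's English description precedes it below -/
import Mathlib

section
/- Constant normal direction for ruled meridian surfaces of hyperbolic type (from the proof of Theorem 5.2, case (ii)): suppose the hyperbolic meridian data satisfy κ ≡ c on J for a constant c, f ≡ a on I for a constant a > 0, and g′ ≡ ε on I with ε ∈ {−1, 1}. (a) If c² > 1, set θ := artanh(ε/c); then the map v ↦ cosh θ·n₁(v) + sinh θ·n₂(v) (= ε cosh θ·l(v) + sinh θ·n(v)) is constant on J, and ⟨z(u,v), N⟩ is constant on I × J, where N denotes this constant vector. (b) If c² < 1, set θ := artanh(εc); then the map v ↦ sinh θ·n₁(v) + cosh θ·n₂(v) (= ε sinh θ·l(v) + cosh θ·n(v)) is constant on J, and ⟨z(u,v), N⟩ is constant on I × J for this constant vector N. In particular, in both cases the surface lies in a fixed hyperplane of Minkowski 4-space. -/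
noncomputable section

/-- The Minkowski inner product on `ℝ⁴` of signature `(3,1)`:
`⟨x,y⟩ = x₁y₁ + x₂y₂ + x₃y₃ − x₄y₄`. -/
def mink (x y : Fin 4 → ℝ) : ℝ :=
  x 0 * y 0 + x 1 * y 1 + x 2 * y 2 - x 3 * y 3

/-- The first standard basis vector `e₁` of `ℝ⁴`. -/
def e1 : Fin 4 → ℝ := fun i => if i = 0 then 1 else 0

/-- The wedge product `a ∧ b`, an antisymmetric `4 × 4` real matrix with entries
`(a ∧ b)_{ij} = aᵢbⱼ − aⱼbᵢ`. -/
def wedge (a b : Fin 4 → ℝ) : Fin 4 → Fin 4 → ℝ :=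
  fun i j => a i * b j - a j * b i

/-- Hyperbolic meridian data in Minkowski 4-space: nonempty open intervals `I, J ⊆ ℝ`,
smooth functions `f, g : I → ℝ` with `f > 0` and `f′² + g′² = 1` on `I`, and smooth maps
`l, n : J → ℝ⁴` with values in the hyperplane `{x₁ = 0}` such that `⟨l,l⟩ ≡ 1`,
`⟨t,t⟩ ≡ 1` where `t := l′`, `⟨n,n⟩ ≡ −1`, `⟨l,n⟩ ≡ 0`, `⟨t,n⟩ ≡ 0` on `J`. -/
structure HyperbolicData where
  I : Set ℝ
  J : Set ℝ
  hI : IsOpen I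
  hJ : IsOpen J
  hIne : I.Nonempty
  hJne : J.Nonempty
  hIconn : I.OrdConnected
  hJconn : J.OrdConnected
  f : ℝ → ℝ
  g : ℝ → ℝ
  hf : ContDiffOn ℝ (⊤ : ℕ∞) f I
  hg : ContDiffOn ℝ (⊤ : ℕ∞) g I
  hfpos : ∀ u ∈ I, 0 < f u
  hunit : ∀ u ∈ I, (deriv f u) ^ 2 + (deriv g u) ^ 2 = 1
  l : ℝ → Fin 4 → ℝ
  n : ℝ → Fin 4 → ℝ
  hl : ContDiffOn ℝ (⊤ : ℕ∞) l J
  hn : ContDiffOn ℝ (⊤ : ℕ∞) n J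
  hlplane : ∀ v ∈ J, l v 0 = 0
  hnplane : ∀ v ∈ J, n v 0 = 0
  hll : ∀ v ∈ J, mink (l v) (l v) = 1
  htt : ∀ v ∈ J, mink (deriv l v) (deriv l v) = 1
  hnn : ∀ v ∈ J, mink (n v) (n v) = -1
  hln : ∀ v ∈ J, mink (l v) (n v) = 0
  htn : ∀ v ∈ J, mink (deriv l v) (n v) = 0

namespace HyperbolicData

variable (d : HyperbolicData)

/-- The unit tangent `t := l′` of the curve `c` on `S²₁(1)`. -/
def t : ℝ → Fin 4 → ℝ := fun v => deriv d.l v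

/-- The spherical curvature `κ := ⟨t′, n⟩` of the curve `c`. -/
def kappa : ℝ → ℝ := fun v => mink (deriv d.t v) (d.n v)

/-- The curvature `κ_m := f′g″ − g′f″` of the meridian curve `m`. -/
def kappaM : ℝ → ℝ := fun u =>
  deriv d.f u * deriv (deriv d.g) u - deriv d.g u * deriv (deriv d.f) u

/-- The meridian surface of hyperbolic type `z(u,v) := f(u)·l(v) + g(u)·e₁`. -/
def z : ℝ → ℝ → Fin 4 → ℝ := fun u v => d.f u • d.l v + d.g u • e1

/-- The tangent frame vector `x := f′·l + g′·e₁`. -/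
def x : ℝ → ℝ → Fin 4 → ℝ := fun u v => deriv d.f u • d.l v + deriv d.g u • e1

/-- The normal frame vector `n₁ := g′·l − f′·e₁`. -/
def n1 : ℝ → ℝ → Fin 4 → ℝ := fun u v => deriv d.g u • d.l v - deriv d.f u • e1

/-- The Gauss map `G := x ∧ y` (with `y = t`). -/
def G : ℝ → ℝ → Fin 4 → Fin 4 → ℝ := fun u v => wedge (d.x u v) (d.t v)

/-- The Laplacian of the Gauss map with respect to the induced metric `du² + f(u)²dv²`:
`ΔG := −(∂²G/∂u² + (1/f²)·∂²G/∂v² + (f′/f)·∂G/∂u)`, computed entrywise. -/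
def lapG : ℝ → ℝ → Fin 4 → Fin 4 → ℝ := fun u v =>
  -(deriv (fun u' => deriv (fun u'' => d.G u'' v) u') u
    + (1 / (d.f u) ^ 2) • deriv (fun v' => deriv (fun v'' => d.G u v'') v') v
    + (deriv d.f u / d.f u) • deriv (fun u' => d.G u' v) u)

/-- The mean curvature vector
`H := (1/2)(∂²z/∂u² + (1/f²)·∂²z/∂v² + (f′/f)·∂z/∂u)`. -/
def H : ℝ → ℝ → Fin 4 → ℝ := fun u v =>
  (1 / 2 : ℝ) • (deriv (fun u' => deriv (fun u'' => d.z u'' v) u') u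
    + (1 / (d.f u) ^ 2) • deriv (fun v' => deriv (fun v'' => d.z u v'') v') v
    + (deriv d.f u / d.f u) • deriv (fun u' => d.z u' v) u)

end HyperbolicData

/-- The inverse hyperbolic tangent `artanh x = (1/2)·log((1 + x)/(1 − x))`. -/
def artanh (x : ℝ) : ℝ := (1 / 2) * Real.log ((1 + x) / (1 - x))

/-! ### Auxiliary lemmas -/

section Aux

open Matrix

lemma tanh_like (x : ℝ) (hx1 : -1 < x) (hx2 : x < 1) :
    Real.sinh (artanh x) = x * Real.cosh (artanh x) := by
  have h1 : (0:ℝ) < 1 + x := by linarith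
  have h2 : (0:ℝ) < 1 - x := by linarith
  set θ := artanh x with hθ
  have hsum : θ + θ = Real.log ((1 + x) / (1 - x)) := by rw [hθ]; unfold artanh; ring
  have hu : Real.exp θ * Real.exp θ = (1 + x) / (1 - x) := by
    rw [← Real.exp_add, hsum, Real.exp_log (div_pos h1 h2)]
  have hu' : (1 - x) * (Real.exp θ * Real.exp θ) = 1 + x := by
    field_simp at hu; linarith [hu]
  have hne : Real.exp θ ≠ 0 := (Real.exp_pos θ).ne'
  rw [Real.sinh_eq, Real.cosh_eq, Real.exp_neg]
  field_simp
  ring_nf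
  nlinarith [hu']

lemma const_on {s : Set ℝ} (hs : IsOpen s) (hc : s.OrdConnected) {f : ℝ → ℝ}
    (hf : ∀ x ∈ s, HasDerivAt f 0 x) {x y : ℝ} (hx : x ∈ s) (hy : y ∈ s) : f x = f y := by
  refine (hc.convex).is_const_of_fderivWithin_eq_zero
    (fun z hz => ((hf z hz).differentiableAt).differentiableWithinAt) ?_ hx hy
  intro z hz
  rw [fderivWithin_of_isOpen hs hz, (hf z hz).hasFDerivAt.fderiv]
  ext
  simp

lemma hasDerivAt_mink {p q : ℝ → Fin 4 → ℝ} {p' q' : Fin 4 → ℝ} {v : ℝ}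
    (hp : HasDerivAt p p' v) (hq : HasDerivAt q q' v) :
    HasDerivAt (fun v => mink (p v) (q v)) (mink p' (q v) + mink (p v) q') v := by
  have hpi : ∀ i, HasDerivAt (fun v => p v i) (p' i) v := fun i => hasDerivAt_pi.1 hp i
  have hqi : ∀ i, HasDerivAt (fun v => q v i) (q' i) v := fun i => hasDerivAt_pi.1 hq i
  have h := ((((hpi 0).mul (hqi 0)).add ((hpi 1).mul (hqi 1))).add
      ((hpi 2).mul (hqi 2))).sub ((hpi 3).mul (hqi 3))
  refine h.congr_deriv ?_
  unfold mink; ring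

lemma mink_basis (l t n w : Fin 4 → ℝ)
    (hll : mink l l = 1) (htt : mink t t = 1) (hnn : mink n n = -1)
    (hlt : mink l t = 0) (hln : mink l n = 0) (htn : mink t n = 0)
    (hl0 : l 0 = 0) (ht0 : t 0 = 0) (hn0 : n 0 = 0)
    (hwl : mink l w = 0) (hwt : mink t w = 0) (hwn : mink n w = 0) (hw0 : w 0 = 0) :
    w = 0 := by
  classical
  simp only [mink] at hll htt hnn hlt hln htn hwl hwt hwn
  set η : Matrix (Fin 4) (Fin 4) ℝ :=
    Matrix.of (fun i j => if i = j then (if i = 3 then (-1:ℝ) else 1) else 0) with hηdef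
  set A : Matrix (Fin 4) (Fin 4) ℝ :=
    Matrix.of (fun i j => if i = 0 then e1 j else if i = 1 then l j else if i = 2 then t j
      else n j) with hAdef
  have hGram : A * η * Aᵀ = η := by
    ext i j
    fin_cases i <;> fin_cases j <;>
      simp [hAdef, hηdef, Matrix.mul_apply, Fin.sum_univ_four, e1] <;> linarith
  have hdetη : η.det = -1 := by
    have : η = Matrix.diagonal ![1,1,1,-1] := by
      ext i j; fin_cases i <;> fin_cases j <;> simp [hηdef, Matrix.diagonal]
    rw [this, Matrix.det_diagonal, Fin.prod_univ_four]
    norm_num [Matrix.cons_val]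
    exact show (1:ℝ) * (-1) = -1 by norm_num
  have hdetA : A.det * -1 * A.det = -1 := by
    have h1 : (A * η * Aᵀ).det = η.det := by rw [hGram]
    rwa [Matrix.det_mul, Matrix.det_mul, Matrix.det_transpose, hdetη] at h1
  have hB : (A * η).det ≠ 0 := by
    rw [Matrix.det_mul, hdetη]
    intro h
    nlinarith [hdetA]
  have hw' : (A * η) *ᵥ w = 0 := by
    ext i
    fin_cases i <;>
      simp [hAdef, hηdef, Matrix.mulVec, Matrix.mul_apply, dotProduct,
        Fin.sum_univ_four, e1] <;> linarith
  have h2 := congrArg (fun v => (A * η)⁻¹ *ᵥ v) hw'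
  simpa [Matrix.mulVec_mulVec, Matrix.nonsing_inv_mul _ (isUnit_iff_ne_zero.2 hB),
    Matrix.one_mulVec, Matrix.mulVec_zero] using h2

/-- Key lemma: if `κ ≡ c` on `J` and `α = β c`, then `α•l + β•n` is constant on `J`,
its `0`-th coordinate vanishes, and `⟨l v, N⟩ = α` for all `v ∈ J`. -/
lemma HyperbolicData.key (d : HyperbolicData) {c α β : ℝ}
    (hk : ∀ v ∈ d.J, d.kappa v = c) (hαβ : α = β * c) :
    ∃ N : Fin 4 → ℝ, (∀ v ∈ d.J, α • d.l v + β • d.n v = N) ∧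
      N 0 = 0 ∧ ∀ v ∈ d.J, mink (d.l v) N = α := by
  obtain ⟨v₀, hv₀⟩ := d.hJne
  have hlD : ∀ v ∈ d.J, HasDerivAt d.l (d.t v) v := fun v hv =>
    ((d.hl.contDiffAt (d.hJ.mem_nhds hv)).differentiableAt (by simp)).hasDerivAt
  have htC : ContDiffOn ℝ (⊤ : ℕ∞) d.t d.J := d.hl.deriv_of_isOpen d.hJ (by simp)
  have htD : ∀ v ∈ d.J, HasDerivAt d.t (deriv d.t v) v := fun v hv =>
    ((htC.contDiffAt (d.hJ.mem_nhds hv)).differentiableAt (by simp)).hasDerivAt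
  have hnD : ∀ v ∈ d.J, HasDerivAt d.n (deriv d.n v) v := fun v hv =>
    ((d.hn.contDiffAt (d.hJ.mem_nhds hv)).differentiableAt (by simp)).hasDerivAt
  have hzero : ∀ {h : ℝ → ℝ} {cv : ℝ}, (∀ x ∈ d.J, h x = cv) →
      ∀ v ∈ d.J, HasDerivAt h 0 v := by
    intro h cv hh v hv
    exact (hasDerivAt_const v cv).congr_of_eventuallyEq
      (Filter.eventuallyEq_of_mem (d.hJ.mem_nhds hv) hh)
  -- derivative of n
  have hderivn : ∀ v ∈ d.J, ∀ i, deriv d.n v i = -(c * d.t v i) := by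
    intro v hv
    have h_ll := (hasDerivAt_mink (hlD v hv) (hlD v hv)).unique (hzero d.hll v hv)
    have h_ln := (hasDerivAt_mink (hlD v hv) (hnD v hv)).unique (hzero d.hln v hv)
    have h_tn := (hasDerivAt_mink (htD v hv) (hnD v hv)).unique (hzero d.htn v hv)
    have h_nn := (hasDerivAt_mink (hnD v hv) (hnD v hv)).unique (hzero d.hnn v hv)
    have hκ : mink (deriv d.t v) (d.n v) = c := hk v hv
    have ht0 : d.t v 0 = 0 :=
      (hasDerivAt_pi.1 (hlD v hv) 0).unique (hzero d.hlplane v hv)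
    have hn'0 : deriv d.n v 0 = 0 :=
      (hasDerivAt_pi.1 (hnD v hv) 0).unique (hzero d.hnplane v hv)
    have hll := d.hll v hv
    have htt := d.htt v hv
    have hnn := d.hnn v hv
    have hln := d.hln v hv
    have htn := d.htn v hv
    have hl0 := d.hlplane v hv
    have hn0 := d.hnplane v hv
    have httv : mink (d.t v) (d.t v) = 1 := htt
    have htnv : mink (d.t v) (d.n v) = 0 := htn
    set w : Fin 4 → ℝ := fun i => deriv d.n v i + c * d.t v i with hwdef
    have hw0 : w 0 = 0 := by simp [hwdef, hn'0, ht0]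
    have hlt : mink (d.l v) (d.t v) = 0 := by
      simp only [mink] at h_ll ⊢; linarith
    have hwl : mink (d.l v) w = 0 := by
      simp only [mink, hwdef] at h_ln htnv hlt ⊢
      linear_combination h_ln - htnv + c * hlt
    have hwt : mink (d.t v) w = 0 := by
      simp only [mink, hwdef] at h_tn hκ httv ⊢
      linear_combination h_tn - hκ + c * httv
    have hwn : mink (d.n v) w = 0 := by
      simp only [mink, hwdef] at h_nn htnv ⊢
      linear_combination (1/2 : ℝ) * h_nn + c * htnv
    have hwzero := mink_basis (d.l v) (d.t v) (d.n v) w hll httv hnn hlt hln htnv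
      hl0 ht0 hn0 hwl hwt hwn hw0
    intro i
    have := congrFun hwzero i
    simp [hwdef] at this
    linarith
  set F : ℝ → Fin 4 → ℝ := fun v => α • d.l v + β • d.n v with hFdef
  have hFD : ∀ i, ∀ v ∈ d.J, HasDerivAt (fun x => F x i) 0 v := by
    intro i v hv
    have h1 := (HasDerivAt.const_mul α (hasDerivAt_pi.1 (hlD v hv) i)).add
      (HasDerivAt.const_mul β (hasDerivAt_pi.1 (hnD v hv) i))
    have h2 : HasDerivAt (fun x => F x i) (α * d.t v i + β * deriv d.n v i) v := by
      exact h1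
    have heq : α * d.t v i + β * deriv d.n v i = 0 := by
      rw [hderivn v hv i]
      linear_combination (d.t v i) * hαβ
    exact heq ▸ h2
  refine ⟨F v₀, fun v hv => funext fun i =>
      const_on d.hJ d.hJconn (hFD i) hv hv₀, ?_, ?_⟩
  · simp [hFdef, d.hlplane v₀ hv₀, d.hnplane v₀ hv₀]
  · intro v hv
    have hc1 : F v = F v₀ := funext fun i => const_on d.hJ d.hJconn (hFD i) hv hv₀
    rw [← hc1]
    have hll := d.hll v hv
    have hln := d.hln v hv
    simp only [mink, hFdef, Pi.add_apply, Pi.smul_apply, smul_eq_mul] at hll hln ⊢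
    linear_combination α * hll + β * hln

end Aux


/-- **Constant normal direction for ruled meridian surfaces of hyperbolic type** (from
the proof of Theorem 5.2, case (ii)): suppose `κ ≡ c` on `J`, `f ≡ a` on `I` with
`a > 0`, and `g′ ≡ ε` on `I` with `ε ∈ {−1,1}`.
(a) If `c² > 1` and `θ := artanh(ε/c)`, the map `v ↦ cosh θ·n₁ + sinh θ·n₂`
(`= ε cosh θ·l + sinh θ·n`) is constant on `J`, and `⟨z, N⟩` is constant on `I × J`
for this constant vector `N`.
(b) If `c² < 1` and `θ := artanh(εc)`, the map `v ↦ sinh θ·n₁ + cosh θ·n₂`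
(`= ε sinh θ·l + cosh θ·n`) is constant on `J`, and `⟨z, N⟩` is constant on `I × J`
for this constant vector `N`.

In both cases the surface lies in a fixed hyperplane of Minkowski 4-space. -/
theorem constant_normal_direction_hyperbolic (d : HyperbolicData)
    (c a ε : ℝ) (ha : 0 < a) (hε : ε = -1 ∨ ε = 1)
    (hk : ∀ v ∈ d.J, d.kappa v = c)
    (hfa : ∀ u ∈ d.I, d.f u = a)
    (hge : ∀ u ∈ d.I, deriv d.g u = ε) :
    (1 < c ^ 2 →
      ∃ N : Fin 4 → ℝ,
        (∀ u ∈ d.I, ∀ v ∈ d.J,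
           Real.cosh (artanh (ε / c)) • d.n1 u v + Real.sinh (artanh (ε / c)) • d.n v = N) ∧
        (∀ v ∈ d.J,
           (ε * Real.cosh (artanh (ε / c))) • d.l v
             + Real.sinh (artanh (ε / c)) • d.n v = N) ∧
        (∃ cst : ℝ, ∀ u ∈ d.I, ∀ v ∈ d.J, mink (d.z u v) N = cst)) ∧
    (c ^ 2 < 1 →
      ∃ N : Fin 4 → ℝ,
        (∀ u ∈ d.I, ∀ v ∈ d.J,
           Real.sinh (artanh (ε * c)) • d.n1 u v + Real.cosh (artanh (ε * c)) • d.n v = N) ∧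
        (∀ v ∈ d.J,
           (ε * Real.sinh (artanh (ε * c))) • d.l v
             + Real.cosh (artanh (ε * c)) • d.n v = N) ∧
        (∃ cst : ℝ, ∀ u ∈ d.I, ∀ v ∈ d.J, mink (d.z u v) N = cst)) := by
  constructor
  · -- case c² > 1
    intro hc2
    have hc0 : c ≠ 0 := fun h => by rw [h] at hc2; norm_num at hc2
    have habs : 1 < |c| := by nlinarith [sq_abs c, abs_nonneg c]
    have hεabs : |ε| = 1 := by rcases hε with h | h <;> simp [h]
    have hx : |ε / c| < 1 := by
      rw [abs_div, hεabs, div_lt_one (by linarith)]; exact habs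
    set θ := artanh (ε / c) with hθdef
    have htanh : Real.sinh θ = (ε / c) * Real.cosh θ :=
      tanh_like _ (abs_lt.1 hx).1 (abs_lt.1 hx).2
    have hαβ : ε * Real.cosh θ = Real.sinh θ * c := by
      rw [htanh]; field_simp
    obtain ⟨N, hN, hN0, hNl⟩ := d.key hk hαβ
    refine ⟨N, ?_, fun v hv => hN v hv, ⟨a * (ε * Real.cosh θ), ?_⟩⟩
    · intro u hu v hv
      have hdf : deriv d.f u = 0 := by
        have h := Filter.EventuallyEq.deriv_eq
          (Filter.eventuallyEq_of_mem (d.hI.mem_nhds hu) hfa)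
        rw [h, deriv_const]
      rw [← hN v hv]
      funext i
      simp [HyperbolicData.n1, hdf, hge u hu]
      ring
    · intro u hu v hv
      have h3 := hNl v hv
      have hl0 := d.hlplane v hv
      simp only [mink, HyperbolicData.z, Pi.add_apply, Pi.smul_apply, smul_eq_mul, e1,
        hfa u hu, hl0, hN0] at h3 ⊢
      norm_num [show (2:Fin 4) ≠ 0 from by decide, show (3:Fin 4) ≠ 0 from by decide]
      linear_combination a * h3
  · -- case c² < 1
    intro hc2
    have habs : |c| < 1 := by nlinarith [sq_abs c, abs_nonneg c]
    have hεabs : |ε| = 1 := by rcases hε with h | h <;> simp [h]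
    have hx : |ε * c| < 1 := by rw [abs_mul, hεabs, one_mul]; exact habs
    set θ := artanh (ε * c) with hθdef
    have htanh : Real.sinh θ = (ε * c) * Real.cosh θ :=
      tanh_like _ (abs_lt.1 hx).1 (abs_lt.1 hx).2
    have hαβ : ε * Real.sinh θ = Real.cosh θ * c := by
      rw [htanh]; rcases hε with h | h <;> rw [h] <;> ring
    obtain ⟨N, hN, hN0, hNl⟩ := d.key hk hαβ
    refine ⟨N, ?_, fun v hv => hN v hv, ⟨a * (ε * Real.sinh θ), ?_⟩⟩
    · intro u hu v hv
      have hdf : deriv d.f u = 0 := by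
        have h := Filter.EventuallyEq.deriv_eq
          (Filter.eventuallyEq_of_mem (d.hI.mem_nhds hu) hfa)
        rw [h, deriv_const]
      rw [← hN v hv]
      funext i
      simp [HyperbolicData.n1, hdf, hge u hu]
      ring
    · intro u hu v hv
      have h3 := hNl v hv
      have hl0 := d.hlplane v hv
      simp only [mink, HyperbolicData.z, Pi.add_apply, Pi.smul_apply, smul_eq_mul, e1,
        hfa u hu, hl0, hN0] at h3 ⊢
      norm_num [show (2:Fin 4) ≠ 0 from by decide, show (3:Fin 4) ≠ 0 from by decide]
      linear_combination a * h3
end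
end

section
/- Mean curvature vector of the meridian surface of hyperbolic type: for all (u,v) ∈ I × J, the vector H := (1/2)(∂²z/∂u² + (1/f²)·∂²z/∂v² + (f′/f)·∂z/∂u) equals −((f(u)·κ_m(u) + g′(u))/(2f(u)))·n₁(u,v) − (κ(v)/(2f(u)))·n₂(v); in particular H is normal to the surface, i.e. ⟨H, ∂z/∂u⟩ = ⟨H, ∂z/∂v⟩ = 0, and ⟨H,H⟩ = ((f·κ_m + g′)² − κ²)/(4f²). -/
noncomputable section

section Helpers

lemma span3 (l1 l2 l3 t1 t2 t3 n1 n2 n3 w1 w2 w3 : ℝ)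
    (hll : l1^2+l2^2-l3^2 = 1) (htt : t1^2+t2^2-t3^2 = 1) (hnn : n1^2+n2^2-n3^2 = -1)
    (hlt : l1*t1+l2*t2-l3*t3 = 0) (hln : l1*n1+l2*n2-l3*n3 = 0) (htn : t1*n1+t2*n2-t3*n3 = 0)
    (h1 : l1*w1+l2*w2-l3*w3 = 0) (h2 : t1*w1+t2*w2-t3*w3 = 0) (h3 : n1*w1+n2*w2-n3*w3 = 0) :
    w1 = 0 ∧ w2 = 0 ∧ w3 = 0 := by
  set D : ℝ := l1*(t2*n3 - t3*n2) - t1*(l2*n3 - l3*n2) + n1*(l2*t3 - l3*t2) with hD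
  have key : -(D^2) = (l1^2+l2^2-l3^2)*(t1^2+t2^2-t3^2)*(n1^2+n2^2-n3^2)
      + 2*(l1*t1+l2*t2-l3*t3)*(t1*n1+t2*n2-t3*n3)*(l1*n1+l2*n2-l3*n3)
      - (l1^2+l2^2-l3^2)*(t1*n1+t2*n2-t3*n3)^2
      - (t1^2+t2^2-t3^2)*(l1*n1+l2*n2-l3*n3)^2
      - (n1^2+n2^2-n3^2)*(l1*t1+l2*t2-l3*t3)^2 := by rw [hD]; ring
  rw [hll, htt, hnn, hlt, hln, htn] at key
  have hD2 : D^2 = 1 := by linarith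
  have c1 : D * w1 = (t2*n3 - n2*t3)*(l1*w1+l2*w2-l3*w3) + (n2*l3 - l2*n3)*(t1*w1+t2*w2-t3*w3)
      + (l2*t3 - t2*l3)*(n1*w1+n2*w2-n3*w3) := by rw [hD]; ring
  have c2 : D * w2 = (t3*n1 - n3*t1)*(l1*w1+l2*w2-l3*w3) + (n3*l1 - l3*n1)*(t1*w1+t2*w2-t3*w3)
      + (l3*t1 - t3*l1)*(n1*w1+n2*w2-n3*w3) := by rw [hD]; ring
  have c3 : D * w3 = -((t1*n2 - n1*t2)*(l1*w1+l2*w2-l3*w3) + (n1*l2 - l1*n2)*(t1*w1+t2*w2-t3*w3)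
      + (l1*t2 - t1*l2)*(n1*w1+n2*w2-n3*w3)) := by rw [hD]; ring
  rw [h1, h2, h3] at c1 c2 c3
  simp only [mul_zero, zero_mul, add_zero, zero_add, neg_zero] at c1 c2 c3
  exact ⟨by linear_combination (-w1) * hD2 + D * c1,
    by linear_combination (-w2) * hD2 + D * c2,
    by linear_combination (-w3) * hD2 + D * c3⟩

lemma hasDerivAt_mink_s17 {A B : ℝ → Fin 4 → ℝ} {A' B' : Fin 4 → ℝ} {v : ℝ}
    (hA : HasDerivAt A A' v) (hB : HasDerivAt B B' v) :
    HasDerivAt (fun w => mink (A w) (B w)) (mink A' (B v) + mink (A v) B') v := by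
  have hAi := hasDerivAt_pi.1 hA
  have hBi := hasDerivAt_pi.1 hB
  have h := ((((hAi 0).mul (hBi 0)).add ((hAi 1).mul (hBi 1))).add
      ((hAi 2).mul (hBi 2))).sub ((hAi 3).mul (hBi 3))
  refine h.congr_deriv ?_
  simp [mink]; ring

end Helpers

/-- **Mean curvature vector of the meridian surface of hyperbolic type**: for all
`(u,v) ∈ I × J`, `H = −((f·κ_m + g′)/(2f))·n₁ − (κ/(2f))·n₂`; in particular `H` is
normal to the surface, i.e. `⟨H, z_u⟩ = ⟨H, z_v⟩ = 0`, and
`⟨H,H⟩ = ((f·κ_m + g′)² − κ²)/(4f²)` (here `n₂ = n`). -/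
theorem mean_curvature_vector_hyperbolic (d : HyperbolicData) :
    ∀ u ∈ d.I, ∀ v ∈ d.J,
      d.H u v = (-((d.f u * d.kappaM u + deriv d.g u) / (2 * d.f u))) • d.n1 u v
          + (-(d.kappa v / (2 * d.f u))) • d.n v ∧
      mink (d.H u v) (deriv (fun u' => d.z u' v) u) = 0 ∧
      mink (d.H u v) (deriv (fun v' => d.z u v') v) = 0 ∧
      mink (d.H u v) (d.H u v)
        = ((d.f u * d.kappaM u + deriv d.g u) ^ 2 - d.kappa v ^ 2) / (4 * (d.f u) ^ 2) := by
  -- basic differentiability facts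
  have hfd : ∀ u ∈ d.I, HasDerivAt d.f (deriv d.f u) u := fun u hu =>
    ((d.hf.contDiffAt (d.hI.mem_nhds hu)).differentiableAt (by simp)).hasDerivAt
  have hgd : ∀ u ∈ d.I, HasDerivAt d.g (deriv d.g u) u := fun u hu =>
    ((d.hg.contDiffAt (d.hI.mem_nhds hu)).differentiableAt (by simp)).hasDerivAt
  have hf1 : ContDiffOn ℝ 1 (deriv d.f) d.I := d.hf.deriv_of_isOpen d.hI (WithTop.coe_le_coe.2 le_top)
  have hg1 : ContDiffOn ℝ 1 (deriv d.g) d.I := d.hg.deriv_of_isOpen d.hI (WithTop.coe_le_coe.2 le_top)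
  have hfd2 : ∀ u ∈ d.I, HasDerivAt (deriv d.f) (deriv (deriv d.f) u) u := fun u hu =>
    ((hf1.contDiffAt (d.hI.mem_nhds hu)).differentiableAt one_ne_zero).hasDerivAt
  have hgd2 : ∀ u ∈ d.I, HasDerivAt (deriv d.g) (deriv (deriv d.g) u) u := fun u hu =>
    ((hg1.contDiffAt (d.hI.mem_nhds hu)).differentiableAt one_ne_zero).hasDerivAt
  have hld : ∀ v ∈ d.J, HasDerivAt d.l (deriv d.l v) v := fun v hv =>
    ((d.hl.contDiffAt (d.hJ.mem_nhds hv)).differentiableAt (by simp)).hasDerivAt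
  have hl1 : ContDiffOn ℝ 1 (deriv d.l) d.J := d.hl.deriv_of_isOpen d.hJ (WithTop.coe_le_coe.2 le_top)
  have htd : ∀ v ∈ d.J, HasDerivAt (deriv d.l) (deriv (deriv d.l) v) v := fun v hv =>
    ((hl1.contDiffAt (d.hJ.mem_nhds hv)).differentiableAt one_ne_zero).hasDerivAt
  -- derivative of the unit-speed relation
  have hperp : ∀ u ∈ d.I,
      deriv d.f u * deriv (deriv d.f) u + deriv d.g u * deriv (deriv d.g) u = 0 := by
    intro u hu
    have h1 : HasDerivAt (fun w => (deriv d.f w) ^ 2 + (deriv d.g w) ^ 2)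
        (2 * deriv d.f u ^ 1 * deriv (deriv d.f) u + 2 * deriv d.g u ^ 1 * deriv (deriv d.g) u)
        u := ((hfd2 u hu).pow 2).add ((hgd2 u hu).pow 2)
    have h2 : (fun w => (deriv d.f w) ^ 2 + (deriv d.g w) ^ 2) =ᶠ[nhds u]
        (fun _ => (1 : ℝ)) :=
      Filter.eventuallyEq_of_mem (d.hI.mem_nhds hu) fun w hw => d.hunit w hw
    have h3 := h1.deriv
    rw [h2.deriv_eq, deriv_const] at h3
    nlinarith [h3]
  -- first components of t and t'
  have ht0 : ∀ v ∈ d.J, deriv d.l v 0 = 0 := by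
    intro v hv
    have h1 : HasDerivAt (fun w => d.l w 0) (deriv d.l v 0) v := hasDerivAt_pi.1 (hld v hv) 0
    have h2 : (fun w => d.l w 0) =ᶠ[nhds v] (fun _ => (0 : ℝ)) :=
      Filter.eventuallyEq_of_mem (d.hJ.mem_nhds hv) fun w hw => d.hlplane w hw
    rw [← h1.deriv, h2.deriv_eq, deriv_const]
  have hP0 : ∀ v ∈ d.J, deriv (deriv d.l) v 0 = 0 := by
    intro v hv
    have h1 : HasDerivAt (fun w => deriv d.l w 0) (deriv (deriv d.l) v 0) v :=
      hasDerivAt_pi.1 (htd v hv) 0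
    have h2 : (fun w => deriv d.l w 0) =ᶠ[nhds v] (fun _ => (0 : ℝ)) :=
      Filter.eventuallyEq_of_mem (d.hJ.mem_nhds hv) fun w hw => ht0 w hw
    rw [← h1.deriv, h2.deriv_eq, deriv_const]
  have mink_comm : ∀ a b : Fin 4 → ℝ, mink a b = mink b a := by
    intro a b; simp only [mink]; ring
  -- ⟨l, t⟩ = 0 on J
  have hlt : ∀ v ∈ d.J, mink (d.l v) (deriv d.l v) = 0 := by
    intro v hv
    have h1 := hasDerivAt_mink_s17 (hld v hv) (hld v hv)
    have h2 : (fun w => mink (d.l w) (d.l w)) =ᶠ[nhds v] (fun _ => (1 : ℝ)) :=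
      Filter.eventuallyEq_of_mem (d.hJ.mem_nhds hv) fun w hw => d.hll w hw
    have h3 := h1.deriv
    rw [h2.deriv_eq, deriv_const] at h3
    rw [mink_comm (deriv d.l v) (d.l v)] at h3
    linarith
  -- ⟨t, t'⟩ = 0 on J
  have htP : ∀ v ∈ d.J, mink (deriv d.l v) (deriv (deriv d.l) v) = 0 := by
    intro v hv
    have h1 := hasDerivAt_mink_s17 (htd v hv) (htd v hv)
    have h2 : (fun w => mink (deriv d.l w) (deriv d.l w)) =ᶠ[nhds v] (fun _ => (1 : ℝ)) :=
      Filter.eventuallyEq_of_mem (d.hJ.mem_nhds hv) fun w hw => d.htt w hw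
    have h3 := h1.deriv
    rw [h2.deriv_eq, deriv_const] at h3
    rw [mink_comm (deriv (deriv d.l) v) (deriv d.l v)] at h3
    linarith
  -- ⟨l, t'⟩ = -1 on J
  have hlP : ∀ v ∈ d.J, mink (d.l v) (deriv (deriv d.l) v) = -1 := by
    intro v hv
    have h1 := hasDerivAt_mink_s17 (hld v hv) (htd v hv)
    have h2 : (fun w => mink (d.l w) (deriv d.l w)) =ᶠ[nhds v] (fun _ => (0 : ℝ)) :=
      Filter.eventuallyEq_of_mem (d.hJ.mem_nhds hv) fun w hw => hlt w hw
    have h3 := h1.deriv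
    rw [h2.deriv_eq, deriv_const] at h3
    have h4 := d.htt v hv
    linarith
  intro u hu v hv
  have hF : d.f u ≠ 0 := ne_of_gt (d.hfpos u hu)
  have hL0 : d.l v 0 = 0 := d.hlplane v hv
  have hN0 : d.n v 0 = 0 := d.hnplane v hv
  have hT0 : deriv d.l v 0 = 0 := ht0 v hv
  have hPP0 : deriv (deriv d.l) v 0 = 0 := hP0 v hv
  have hKdef : d.kappa v = mink (deriv (deriv d.l) v) (d.n v) := rfl
  -- component forms of the inner product relations
  have mll : d.l v 1 * d.l v 1 + d.l v 2 * d.l v 2 - d.l v 3 * d.l v 3 = 1 := by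
    have h := d.hll v hv; simp only [mink, hL0, zero_mul, zero_add] at h; exact h
  have mtt : deriv d.l v 1 * deriv d.l v 1 + deriv d.l v 2 * deriv d.l v 2
      - deriv d.l v 3 * deriv d.l v 3 = 1 := by
    have h := d.htt v hv; simp only [mink, hT0, zero_mul, zero_add] at h; exact h
  have mnn : d.n v 1 * d.n v 1 + d.n v 2 * d.n v 2 - d.n v 3 * d.n v 3 = -1 := by
    have h := d.hnn v hv; simp only [mink, hN0, zero_mul, zero_add] at h; exact h
  have mlt : d.l v 1 * deriv d.l v 1 + d.l v 2 * deriv d.l v 2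
      - d.l v 3 * deriv d.l v 3 = 0 := by
    have h := hlt v hv; simp only [mink, hL0, zero_mul, zero_add] at h; exact h
  have mln : d.l v 1 * d.n v 1 + d.l v 2 * d.n v 2 - d.l v 3 * d.n v 3 = 0 := by
    have h := d.hln v hv; simp only [mink, hL0, zero_mul, zero_add] at h; exact h
  have mtn : deriv d.l v 1 * d.n v 1 + deriv d.l v 2 * d.n v 2
      - deriv d.l v 3 * d.n v 3 = 0 := by
    have h := d.htn v hv; simp only [mink, hT0, zero_mul, zero_add] at h; exact h
  have mlP : d.l v 1 * deriv (deriv d.l) v 1 + d.l v 2 * deriv (deriv d.l) v 2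
      - d.l v 3 * deriv (deriv d.l) v 3 = -1 := by
    have h := hlP v hv; simp only [mink, hL0, zero_mul, zero_add] at h; exact h
  have mtP : deriv d.l v 1 * deriv (deriv d.l) v 1 + deriv d.l v 2 * deriv (deriv d.l) v 2
      - deriv d.l v 3 * deriv (deriv d.l) v 3 = 0 := by
    have h := htP v hv; simp only [mink, hT0, zero_mul, zero_add] at h; exact h
  have mPn : deriv (deriv d.l) v 1 * d.n v 1 + deriv (deriv d.l) v 2 * d.n v 2
      - deriv (deriv d.l) v 3 * d.n v 3 = d.kappa v := by
    rw [hKdef]; simp only [mink, hPP0, zero_mul, zero_add]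
  -- Frenet relation: l'' = -l - kappa • n
  obtain ⟨w1, w2, w3⟩ := span3 (d.l v 1) (d.l v 2) (d.l v 3)
    (deriv d.l v 1) (deriv d.l v 2) (deriv d.l v 3)
    (d.n v 1) (d.n v 2) (d.n v 3)
    (deriv (deriv d.l) v 1 + d.l v 1 + d.kappa v * d.n v 1)
    (deriv (deriv d.l) v 2 + d.l v 2 + d.kappa v * d.n v 2)
    (deriv (deriv d.l) v 3 + d.l v 3 + d.kappa v * d.n v 3)
    (by linear_combination mll) (by linear_combination mtt) (by linear_combination mnn)
    (by linear_combination mlt) (by linear_combination mln) (by linear_combination mtn)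
    (by linear_combination mlP + mll + d.kappa v * mln)
    (by linear_combination mtP + mlt + d.kappa v * mtn)
    (by linear_combination mPn + mln + d.kappa v * mnn)
  have hPvec : deriv (deriv d.l) v = -d.l v - d.kappa v • d.n v := by
    have h0 : deriv (deriv d.l) v 0 = -d.l v 0 - d.kappa v * d.n v 0 := by
      rw [hPP0, hL0, hN0]; ring
    have h1 : deriv (deriv d.l) v 1 = -d.l v 1 - d.kappa v * d.n v 1 := by linarith
    have h2 : deriv (deriv d.l) v 2 = -d.l v 2 - d.kappa v * d.n v 2 := by linarith
    have h3 : deriv (deriv d.l) v 3 = -d.l v 3 - d.kappa v * d.n v 3 := by linarith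
    funext i
    simp only [Pi.sub_apply, Pi.neg_apply, Pi.smul_apply, smul_eq_mul]
    fin_cases i
    exacts [h0, h1, h2, h3]
  -- derivatives of z
  have hzu : deriv (fun u' => d.z u' v) u = deriv d.f u • d.l v + deriv d.g u • e1 :=
    (((hfd u hu).smul_const (d.l v)).add ((hgd u hu).smul_const e1)).deriv
  have hzuu : deriv (fun u' => deriv (fun u'' => d.z u'' v) u') u
      = deriv (deriv d.f) u • d.l v + deriv (deriv d.g) u • e1 := by
    have hev : (fun u' => deriv (fun u'' => d.z u'' v) u')
        =ᶠ[nhds u] (fun u' => deriv d.f u' • d.l v + deriv d.g u' • e1) :=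
      Filter.eventuallyEq_of_mem (d.hI.mem_nhds hu) fun u' hu' =>
        (((hfd u' hu').smul_const (d.l v)).add ((hgd u' hu').smul_const e1)).deriv
    rw [hev.deriv_eq]
    exact (((hfd2 u hu).smul_const (d.l v)).add ((hgd2 u hu).smul_const e1)).deriv
  have hzv : deriv (fun v' => d.z u v') v = d.f u • deriv d.l v :=
    (((hld v hv).const_smul (d.f u)).add_const (d.g u • e1)).deriv
  have hzvv : deriv (fun v' => deriv (fun v'' => d.z u v'') v') v
      = d.f u • deriv (deriv d.l) v := by
    have hev : (fun v' => deriv (fun v'' => d.z u v'') v')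
        =ᶠ[nhds v] (fun v' => d.f u • deriv d.l v') :=
      Filter.eventuallyEq_of_mem (d.hJ.mem_nhds hv) fun v' hv' =>
        (((hld v' hv').const_smul (d.f u)).add_const (d.g u • e1)).deriv
    rw [hev.deriv_eq]
    exact ((htd v hv).const_smul (d.f u)).deriv
  have hHval : d.H u v = (1 / 2 : ℝ) •
      ((deriv (deriv d.f) u • d.l v + deriv (deriv d.g) u • e1)
        + (1 / (d.f u) ^ 2) • (d.f u • (-d.l v - d.kappa v • d.n v))
        + (deriv d.f u / d.f u) • (deriv d.f u • d.l v + deriv d.g u • e1)) := by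
    show (1 / 2 : ℝ) • (deriv (fun u' => deriv (fun u'' => d.z u'' v) u') u
      + (1 / (d.f u) ^ 2) • deriv (fun v' => deriv (fun v'' => d.z u v'') v') v
      + (deriv d.f u / d.f u) • deriv (fun u' => d.z u' v) u) = _
    rw [hzuu, hzvv, hzu, hPvec]
  have hFi : d.f u * (d.f u)⁻¹ = 1 := mul_inv_cancel₀ hF
  have hu1 : (deriv d.f u) ^ 2 + (deriv d.g u) ^ 2 = 1 := d.hunit u hu
  have hp1 : deriv d.f u * deriv (deriv d.f) u + deriv d.g u * deriv (deriv d.g) u = 0 :=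
    hperp u hu
  have hKm : d.kappaM u
      = deriv d.f u * deriv (deriv d.g) u - deriv d.g u * deriv (deriv d.f) u := rfl
  have part1 : d.H u v = (-((d.f u * d.kappaM u + deriv d.g u) / (2 * d.f u))) • d.n1 u v
      + (-(d.kappa v / (2 * d.f u))) • d.n v := by
    rw [hHval, hKm]
    funext i
    simp only [HyperbolicData.n1, Pi.add_apply, Pi.smul_apply, Pi.sub_apply, Pi.neg_apply,
      smul_eq_mul]
    linear_combination
      (((d.f u)⁻¹ / 2) * (d.l v i * (1 - d.f u * deriv (deriv d.f) u)
        - e1 i * (d.f u * deriv (deriv d.g) u))) * hu1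
      + (((d.f u)⁻¹ / 2) * (d.l v i * (d.f u * deriv d.f u)
        + e1 i * (d.f u * deriv d.g u))) * hp1
      + (-((d.f u)⁻¹ * (d.l v i + d.kappa v * d.n v i) / 2)
        - deriv (deriv d.f) u * d.l v i / 2 - deriv (deriv d.g) u * e1 i / 2) * hFi
  have part2 : mink (d.H u v) (deriv (fun u' => d.z u' v) u) = 0 := by
    rw [part1, hzu]
    simp only [HyperbolicData.n1, Pi.add_apply, Pi.smul_apply, Pi.sub_apply,
      Pi.neg_apply, smul_eq_mul]
    simp [mink, e1, hL0, hN0]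
    linear_combination
      (-((d.f u * d.kappaM u + deriv d.g u) / (2 * d.f u)) * deriv d.g u * deriv d.f u) * mll
      + (-(d.kappa v / (2 * d.f u)) * deriv d.f u) * mln
  have part3 : mink (d.H u v) (deriv (fun v' => d.z u v') v) = 0 := by
    rw [part1, hzv]
    simp only [HyperbolicData.n1, Pi.add_apply, Pi.smul_apply, Pi.sub_apply,
      Pi.neg_apply, smul_eq_mul]
    simp [mink, e1, hL0, hN0, hT0]
    linear_combination
      (-((d.f u * d.kappaM u + deriv d.g u) / (2 * d.f u)) * deriv d.g u * d.f u) * mlt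
      + (-(d.kappa v / (2 * d.f u)) * d.f u) * mtn
  have part4 : mink (d.H u v) (d.H u v)
      = ((d.f u * d.kappaM u + deriv d.g u) ^ 2 - d.kappa v ^ 2) / (4 * (d.f u) ^ 2) := by
    rw [part1]
    simp only [HyperbolicData.n1, Pi.add_apply, Pi.smul_apply, Pi.sub_apply,
      Pi.neg_apply, smul_eq_mul]
    simp [mink, e1, hL0, hN0]
    have key : ((d.f u * d.kappaM u + deriv d.g u) ^ 2 - d.kappa v ^ 2) / (4 * (d.f u) ^ 2)
        = ((d.f u * d.kappaM u + deriv d.g u) / (2 * d.f u)) ^ 2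
          - (d.kappa v / (2 * d.f u)) ^ 2 := by
      rw [div_pow, div_pow, div_sub_div_same]; congr 1; ring
    rw [key]
    linear_combination
      (((d.f u * d.kappaM u + deriv d.g u) / (2 * d.f u)) ^ 2 * deriv d.g u ^ 2) * mll
      + ((d.kappa v / (2 * d.f u)) ^ 2) * mnn
      + (2 * ((d.f u * d.kappaM u + deriv d.g u) / (2 * d.f u))
          * (d.kappa v / (2 * d.f u)) * deriv d.g u) * mln
      + (((d.f u * d.kappaM u + deriv d.g u) / (2 * d.f u)) ^ 2) * hu1
  exact ⟨part1, part2, part3, part4⟩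
end
end
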